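/- arXiv:2605.23349 — 4 statements merged into one kernel-verified Lean document; each statement's English description precedes it below -/
import Mathlib

section
/- Let (X,d) be a compact metric space and μ a Borel probability measure with full support. If u, v : X → X are measurable maps such that d(u(x), x') = d(v(x), x') for (μ⊗μ)-almost every pair (x,x'), then u(x) = v(x) for μ-almost every x. -/
open MeasureTheory

/-- Full-support distance separation: if `d(u(x), x') = d(v(x), x')` for
`μ ⊗ μ`-a.e. `(x, x')`, then `u = v` `μ`-a.e. -/
theorem ae_eq_of_ae_dist_eq
    {X : Type*} [MetricSpace X] [CompactSpace X]
    [MeasurableSpace X] [BorelSpace X]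
    (μ : Measure X) [IsProbabilityMeasure μ]
    (hfull : ∀ U : Set X, IsOpen U → U.Nonempty → 0 < μ U)
    (u v : X → X) (hu : Measurable u) (hv : Measurable v)
    (h : ∀ᵐ p : X × X ∂(μ.prod μ), dist (u p.1) p.2 = dist (v p.1) p.2) :
    ∀ᵐ x ∂μ, u x = v x := by
  filter_upwards [Measure.ae_ae_of_ae_prod h] with x hx
  set S : Set X := {x' | dist (u x) x' = dist (v x) x'} with hS
  have hdense : Dense S := by
    rw [dense_iff_inter_open]
    intro U hU hUne
    by_contra hempty
    rw [Set.not_nonempty_iff_eq_empty] at hempty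
    have hsub : U ⊆ Sᶜ := fun y hy => fun hyS =>
      Set.eq_empty_iff_forall_notMem.mp hempty y ⟨hy, hyS⟩
    have : μ U = 0 := measure_mono_null hsub hx
    exact absurd this (hfull U hU hUne).ne'
  have heq : (fun x' => dist (u x) x') = fun x' => dist (v x) x' :=
    Continuous.ext_on hdense (continuous_const.dist continuous_id)
      (continuous_const.dist continuous_id) (fun y hy => hy)
  have := congrFun heq (u x)
  simp only [dist_self] at this
  exact (dist_eq_zero.mp this.symm).symm
end

section
/- Let (X,d) be a compact metric space and μ a Borel probability measure with full support. Suppose A : X → X is measurable with A_#μ = μ and d(Ax, Ax') = d(x, x') for (μ⊗μ)-almost every (x,x'). Then the map B ↦ A⁻¹B induces an automorphism of the measure algebra of (X, μ); equivalently, the σ-algebra A⁻¹(Borel(X)) equals Borel(X) modulo μ-null sets. -/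
/-!
Write `S` for the co-null set of points `x` with `d(Ax, Ay) = d(x, y)` for a.e. `y`. Since `μ` has
full support, any two co-null sets meet in a dense set, so for `x, x' ∈ S` we can let `y → x'`
along points of both fibres and get `d(Ax, Ax') = d(x, x')`. Thus `A` is an isometry on the dense
set `S`, and it extends to an isometry `T` of the complete space `X` with `A = T` a.e. An isometry
of a complete space is a closed embedding, so `T` maps Borel sets to Borel sets, and every Borel
`B` equals `A⁻¹(T B)` modulo `μ`.
-/

open MeasureTheory Filter Topology Set

lemma exists_isometry_eqOn_of_dense {X Y : Type*} [PseudoMetricSpace X] [MetricSpace Y]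
    [CompleteSpace Y] {S : Set X} (hS : Dense S) {f : X → Y}
    (hf : ∀ x ∈ S, ∀ x' ∈ S, dist (f x) (f x') = dist x x') :
    ∃ T : X → Y, Isometry T ∧ EqOn T f S := by
  have he : IsUniformInducing ((↑) : S → X) := isUniformEmbedding_subtype_val.isUniformInducing
  have hfS : UniformContinuous fun x : S => f x :=
    (Isometry.of_dist_eq (f := fun x : S => f x) fun a b => hf a a.2 b b.2).uniformContinuous
  set T := (he.isDenseInducing hS.denseRange_val).extend fun x : S => f x
  have hTf : EqOn T f S := fun x hx => uniformly_extend_of_ind he hS.denseRange_val hfS ⟨x, hx⟩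
  have hT : Continuous T := (uniformContinuous_uniformly_extend he hS.denseRange_val hfS).continuous
  have hdist : (fun p : X × X => dist (T p.1) (T p.2)) = fun p => dist p.1 p.2 := by
    refine Continuous.ext_on (hS.prod hS) (by fun_prop) (by fun_prop) ?_
    rintro ⟨a, b⟩ ⟨ha, hb⟩
    simp only [hTf ha, hTf hb, hf a ha b hb]
  exact ⟨T, Isometry.of_dist_eq fun a b => congrFun hdist (a, b), hTf⟩

section AeIsometry

variable {X Y : Type*} [PseudoMetricSpace X] [MeasurableSpace X] {μ : Measure X}
  [μ.IsOpenPosMeasure]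

lemma dist_eq_of_ae_dist_eq [PseudoMetricSpace Y] {f : X → Y} {x x' : X}
    (hx : ∀ᵐ y ∂μ, dist (f x) (f y) = dist x y)
    (hx' : ∀ᵐ y ∂μ, dist (f x') (f y) = dist x' y) :
    dist (f x) (f x') = dist x x' := by
  set E := {y | dist (f x) (f y) = dist x y ∧ dist (f x') (f y) = dist x' y}
  have : (𝓝[E] x').NeBot :=
    mem_closure_iff_nhdsWithin_neBot.1 ((μ.dense_of_ae (hx.and hx')).closure_eq ▸ mem_univ x')
  have hE : ∀ᶠ y in 𝓝[E] x', y ∈ E := self_mem_nhdsWithin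
  have hfx' : Tendsto f (𝓝[E] x') (𝓝 (f x')) := by
    rw [tendsto_iff_dist_tendsto_zero]
    refine (tendsto_iff_dist_tendsto_zero.1 (tendsto_id.mono_left nhdsWithin_le_nhds)).congr' ?_
    filter_upwards [hE] with y hy
    rw [id, dist_comm y, dist_comm (f y), hy.2]
  refine tendsto_nhds_unique ((tendsto_const_nhds.dist hfx').congr' ?_)
    (tendsto_const_nhds.dist (nhdsWithin_le_nhds (a := x')))
  filter_upwards [hE] with y hy
  exact hy.1

lemma exists_isometry_ae_eq_of_ae_ae_dist_eq [MetricSpace Y] [CompleteSpace Y] {f : X → Y}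
    (hf : ∀ᵐ x ∂μ, ∀ᵐ y ∂μ, dist (f x) (f y) = dist x y) :
    ∃ T : X → Y, Isometry T ∧ f =ᵐ[μ] T := by
  obtain ⟨T, hT, hTf⟩ := exists_isometry_eqOn_of_dense (μ.dense_of_ae hf)
    fun x hx x' hx' => dist_eq_of_ae_dist_eq hx hx'
  exact ⟨T, hT, hf.mono fun x hx => (hTf hx).symm⟩

end AeIsometry

lemma MeasurableEmbedding.exists_measurableSet_preimage_ae_eq {X Y : Type*} [MeasurableSpace X]
    [MeasurableSpace Y] {μ : Measure X} {T f : X → Y} (hT : MeasurableEmbedding T)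
    (hfT : f =ᵐ[μ] T) {B : Set X} (hB : MeasurableSet B) :
    ∃ C : Set Y, MeasurableSet C ∧ f ⁻¹' C =ᵐ[μ] B := by
  refine ⟨T '' B, hT.measurableSet_image.2 hB, ?_⟩
  filter_upwards [hfT] with x hx
  change (f x ∈ T '' B) = (x ∈ B)
  rw [hx, hT.injective.mem_set_image]

theorem ae_isometry_measure_algebra_automorphism_general
    {X : Type*} [MetricSpace X] [CompactSpace X]
    [MeasurableSpace X] [BorelSpace X]
    (μ : Measure X) [IsProbabilityMeasure μ]
    (hfull : ∀ U : Set X, IsOpen U → U.Nonempty → 0 < μ U)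
    (A : X → X)
    (hiso : ∀ᵐ p : X × X ∂(μ.prod μ), dist (A p.1) (A p.2) = dist p.1 p.2) :
    ∀ B : Set X, MeasurableSet B →
      ∃ C : Set X, MeasurableSet C ∧ μ (symmDiff B (A ⁻¹' C)) = 0 := by
  have : μ.IsOpenPosMeasure := ⟨fun U hU hne => (hfull U hU hne).ne'⟩
  obtain ⟨T, hT, hAT⟩ := exists_isometry_ae_eq_of_ae_ae_dist_eq (Measure.ae_ae_of_ae_prod hiso)
  intro B hB
  obtain ⟨C, hC, hCB⟩ :=
    hT.isClosedEmbedding.measurableEmbedding.exists_measurableSet_preimage_ae_eq hAT hB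
  exact ⟨C, hC, measure_symmDiff_eq_zero_iff.2 hCB.symm⟩

/-- An almost-everywhere isometry preserving a fully supported measure
induces an automorphism of the measure algebra: the σ-algebra
`A⁻¹(Borel X)` equals `Borel X` modulo `μ`-null sets. -/
theorem ae_isometry_measure_algebra_automorphism
    {X : Type*} [MetricSpace X] [CompactSpace X]
    [MeasurableSpace X] [BorelSpace X]
    (μ : Measure X) [IsProbabilityMeasure μ]
    (hfull : ∀ U : Set X, IsOpen U → U.Nonempty → 0 < μ U)
    (A : X → X) (hA : Measurable A) (hinv : Measure.map A μ = μ)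
    (hiso : ∀ᵐ p : X × X ∂(μ.prod μ), dist (A p.1) (A p.2) = dist p.1 p.2) :
    ∀ B : Set X, MeasurableSet B →
      ∃ C : Set X, MeasurableSet C ∧ μ (symmDiff B (A ⁻¹' C)) = 0 :=
  ae_isometry_measure_algebra_automorphism_general μ hfull A hiso
end

section
/- With dense support anchors, two compact metric measure-preserving systems are Furstenberg disjoint if and only if for every n, m, R ≥ 1, every joining λ has the same anchored distance-array law as the product joining: Φ̃_{n,m,R}(λ) = Φ̃_{n,m,R}(μ⊗ν). -/
open MeasureTheory

/-- The support of a Borel measure. -/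
def msupport {X : Type*} [TopologicalSpace X] [MeasurableSpace X]
    (μ : Measure X) : Set X :=
  {x | ∀ U ∈ nhds x, 0 < μ U}

/-- The anchored multi-orbit distance-array map of order `(n, m, R)`:
all orbit distances `d_X(T^a x_i, T^b x_j)`, `d_Y(S^a y_i, S^b y_j)` together
with the anchored distances `d_X(T^a x_i, a_r)` and `d_Y(S^a y_i, b_r)`. -/
def anchoredArrayMap {X Y : Type*} [MetricSpace X] [MetricSpace Y]
    (T : X → X) (S : Y → Y) (a : ℕ → X) (b : ℕ → Y) (n m R : ℕ) :
    (Fin n → X × Y) →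
      (Fin n × Fin n × Fin m × Fin m → ℝ) × (Fin n × Fin m × Fin R → ℝ) ×
      (Fin n × Fin n × Fin m × Fin m → ℝ) × (Fin n × Fin m × Fin R → ℝ) :=
  fun z =>
    (fun p => dist (T^[(p.2.2.1 : ℕ)] (z p.1).1) (T^[(p.2.2.2 : ℕ)] (z p.2.1).1),
     fun p => dist (T^[(p.2.1 : ℕ)] (z p.1).1) (a p.2.2.1),
     fun p => dist (S^[(p.2.2.1 : ℕ)] (z p.1).2) (S^[(p.2.2.2 : ℕ)] (z p.2.1).2),
     fun p => dist (S^[(p.2.1 : ℕ)] (z p.1).2) (b p.2.2.1))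

/-- The set of joinings. -/
def joiningSet {X Y : Type*} [MeasurableSpace X] [MeasurableSpace Y]
    (T : X → X) (S : Y → Y) (μ : Measure X) (ν : Measure Y) :
    Set (Measure (X × Y)) :=
  {l | IsProbabilityMeasure l ∧ Measure.map Prod.fst l = μ ∧
    Measure.map Prod.snd l = ν ∧ Measure.map (Prod.map T S) l = l}

/-- The complement of the measure-theoretic support is open. -/
lemma msupport_isClosed {X : Type*} [TopologicalSpace X] [MeasurableSpace X]
    (μ : Measure X) : IsClosed (msupport μ) := by
  rw [← isOpen_compl_iff]
  refine isOpen_iff_mem_nhds.2 fun x hx => ?_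
  simp only [msupport, Set.mem_compl_iff, Set.mem_setOf_eq, not_forall] at hx
  obtain ⟨U, hU, hU0⟩ := hx
  have hU0' : μ U = 0 := by simpa [pos_iff_ne_zero] using hU0
  obtain ⟨V, hVU, hV, hxV⟩ := mem_nhds_iff.1 hU
  have hV0 : μ V = 0 := le_antisymm (hU0' ▸ measure_mono hVU) bot_le
  refine Filter.mem_of_superset (hV.mem_nhds hxV) fun y hy hmem => ?_
  exact absurd (hmem V (hV.mem_nhds hy)) (by simp [hV0])

/-- The complement of the measure-theoretic support is null. -/
lemma msupport_compl_null {X : Type*} [TopologicalSpace X]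
    [SecondCountableTopology X] [MeasurableSpace X]
    (μ : Measure X) : μ (msupport μ)ᶜ = 0 := by
  apply measure_null_of_locally_null
  intro x hx
  simp only [msupport, Set.mem_compl_iff, Set.mem_setOf_eq, not_forall] at hx
  obtain ⟨U, hU, hU0⟩ := hx
  exact ⟨U, mem_nhdsWithin_of_mem_nhds hU, by simpa [pos_iff_ne_zero] using hU0⟩

lemma measurable_anchoredArrayMap {X Y : Type*} [MetricSpace X] [MetricSpace Y]
    [SecondCountableTopology X] [SecondCountableTopology Y]
    [MeasurableSpace X] [BorelSpace X] [MeasurableSpace Y] [BorelSpace Y]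
    {T : X → X} {S : Y → Y} (hT : Measurable T) (hS : Measurable S)
    (a : ℕ → X) (b : ℕ → Y) (n m R : ℕ) :
    Measurable (anchoredArrayMap T S a b n m R) := by
  unfold anchoredArrayMap
  refine Measurable.prodMk ?_ (Measurable.prodMk ?_ (Measurable.prodMk ?_ ?_)) <;>
    refine measurable_pi_lambda _ fun p => ?_
  · exact ((hT.iterate _).comp (measurable_pi_apply _).fst).dist
      ((hT.iterate _).comp (measurable_pi_apply _).fst)
  · exact (((hT.iterate _).comp (measurable_pi_apply _).fst)).dist measurable_const
  · exact ((hS.iterate _).comp (measurable_pi_apply _).snd).dist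
      ((hS.iterate _).comp (measurable_pi_apply _).snd)
  · exact (((hS.iterate _).comp (measurable_pi_apply _).snd)).dist measurable_const

/-- Anchored distance-array criterion for Furstenberg disjointness: with
dense support anchors, two compact metric measure-preserving systems are
disjoint iff every joining has the same anchored distance-array law as the
product joining, at every finite order `(n, m, R)`. -/
theorem disjoint_iff_anchored_arrays_product
    {X Y : Type*} [MetricSpace X] [CompactSpace X]
    [MeasurableSpace X] [BorelSpace X]
    [MetricSpace Y] [CompactSpace Y]
    [MeasurableSpace Y] [BorelSpace Y]
    (T : X → X) (S : Y → Y) (hT : Measurable T) (hS : Measurable S)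
    (μ : Measure X) (ν : Measure Y)
    [IsProbabilityMeasure μ] [IsProbabilityMeasure ν]
    (hμ : Measure.map T μ = μ) (hν : Measure.map S ν = ν)
    (a : ℕ → X) (b : ℕ → Y)
    (ha : msupport μ ⊆ closure (Set.range a))
    (hb : msupport ν ⊆ closure (Set.range b)) :
    (∀ lam ∈ joiningSet T S μ ν, lam = μ.prod ν) ↔
    (∀ n m R : ℕ, ∀ lam ∈ joiningSet T S μ ν,
      Measure.map (anchoredArrayMap T S a b n m R)
        (Measure.pi fun _ : Fin n => lam) =
      Measure.map (anchoredArrayMap T S a b n m R)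
        (Measure.pi fun _ : Fin n => μ.prod ν)) := by
  constructor
  · intro h n m R lam hlam
    rw [h lam hlam]
  · intro h lam hlam
    obtain ⟨hP, hfst, hsnd, hinv⟩ := hlam
    haveI := hP
    set ρ : Measure (X × Y) := μ.prod ν with hρ
    -- the anchored embedding maps
    set E : X × Y → (ℕ → ℝ × ℝ) :=
      fun p => fun r => (dist p.1 (a r), dist p.2 (b r)) with hE
    have hEcont : Continuous E := by
      refine continuous_pi fun r => ?_
      exact (continuous_fst.dist continuous_const).prodMk
        (continuous_snd.dist continuous_const)
    have hEmeas : Measurable E := hEcont.measurable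
    have hERmeas : ∀ R : ℕ, Measurable
        (fun p : X × Y => fun r : Fin R => (dist p.1 (a r), dist p.2 (b r))) :=
      fun R => measurable_pi_lambda _ fun r =>
        (measurable_fst.dist measurable_const).prodMk
          (measurable_snd.dist measurable_const)
    -- finite anchored laws agree
    have ERstep : ∀ R : ℕ,
        Measure.map (fun p : X × Y => fun r : Fin R =>
          (dist p.1 (a r), dist p.2 (b r))) lam =
        Measure.map (fun p : X × Y => fun r : Fin R =>
          (dist p.1 (a r), dist p.2 (b r))) ρ := by
      intro R
      have hA := h 1 1 R lam ⟨hP, hfst, hsnd, hinv⟩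
      set A := anchoredArrayMap T S a b 1 1 R with hAdef
      have hAmeas : Measurable A := measurable_anchoredArrayMap hT hS a b 1 1 R
      set π : ((Fin 1 × Fin 1 × Fin 1 × Fin 1 → ℝ) × (Fin 1 × Fin 1 × Fin R → ℝ) ×
          (Fin 1 × Fin 1 × Fin 1 × Fin 1 → ℝ) × (Fin 1 × Fin 1 × Fin R → ℝ)) →
          (Fin R → ℝ × ℝ) :=
        fun q => fun r => (q.2.1 (0, 0, r), q.2.2.2 (0, 0, r)) with hπ
      have hπmeas : Measurable π := by
        refine measurable_pi_lambda _ fun r => ?_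
        exact ((measurable_pi_apply _).comp (measurable_fst.comp measurable_snd)).prodMk
          ((measurable_pi_apply _).comp
            (measurable_snd.comp (measurable_snd.comp measurable_snd)))
      have hcomp : ∀ z : Fin 1 → X × Y,
          (fun p : X × Y => fun r : Fin R =>
            (dist p.1 (a r), dist p.2 (b r))) (z default) = π (A z) := by
        intro z
        funext r
        simp [hπ, hAdef, anchoredArrayMap]
      have hmarg : ∀ κ : Measure (X × Y), IsProbabilityMeasure κ →
          Measure.map (fun p : X × Y => fun r : Fin R =>
            (dist p.1 (a r), dist p.2 (b r))) κ =
          Measure.map π (Measure.map A (Measure.pi fun _ : Fin 1 => κ)) := by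
        intro κ hκ
        haveI := hκ
        have h1 : Measure.map (fun z : Fin 1 → X × Y => z default)
            (Measure.pi fun _ : Fin 1 => κ) = κ :=
          (measurePreserving_piUnique fun _ : Fin 1 => κ).map_eq
        calc Measure.map (fun p : X × Y => fun r : Fin R =>
              (dist p.1 (a r), dist p.2 (b r))) κ
            = Measure.map (fun p : X × Y => fun r : Fin R =>
                (dist p.1 (a r), dist p.2 (b r)))
              (Measure.map (fun z : Fin 1 → X × Y => z default)
                (Measure.pi fun _ : Fin 1 => κ)) := by rw [h1]
          _ = Measure.map ((fun p : X × Y => fun r : Fin R =>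
                (dist p.1 (a r), dist p.2 (b r))) ∘ (fun z : Fin 1 → X × Y => z default))
              (Measure.pi fun _ : Fin 1 => κ) :=
            Measure.map_map (hERmeas R) (measurable_pi_apply _)
          _ = Measure.map (π ∘ A) (Measure.pi fun _ : Fin 1 => κ) :=
            congrArg (fun f => Measure.map f (Measure.pi fun _ : Fin 1 => κ))
              (funext hcomp)
          _ = Measure.map π (Measure.map A (Measure.pi fun _ : Fin 1 => κ)) :=
            (Measure.map_map hπmeas hAmeas).symm
      rw [hmarg lam hP, hmarg ρ inferInstance, hA]
    -- full anchored law agrees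
    haveI : IsProbabilityMeasure (Measure.map E lam) :=
      Measure.isProbabilityMeasure_map hEmeas.aemeasurable
    haveI : IsProbabilityMeasure (Measure.map E ρ) :=
      Measure.isProbabilityMeasure_map hEmeas.aemeasurable
    have hEeq : Measure.map E lam = Measure.map E ρ := by
      refine ext_of_generate_finite (measurableCylinders fun _ : ℕ => ℝ × ℝ)
        generateFrom_measurableCylinders.symm isPiSystem_measurableCylinders ?_
        (by simp)
      intro t ht
      obtain ⟨s, Sset, hSmeas, rfl⟩ := (mem_measurableCylinders t).1 ht
      set R : ℕ := s.sup id + 1 with hR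
      have hsR : ∀ i ∈ s, (i : ℕ) < R := fun i hi =>
        Nat.lt_succ_of_le (Finset.le_sup (f := id) hi)
      set g : (Fin R → ℝ × ℝ) → (∀ i : s, ℝ × ℝ) :=
        fun v i => v ⟨i.1, hsR i.1 i.2⟩ with hg
      have hgmeas : Measurable g := measurable_pi_lambda _ fun i => measurable_pi_apply _
      have hcylg : E ⁻¹' cylinder s Sset =
          (fun p : X × Y => fun r : Fin R =>
            (dist p.1 (a r), dist p.2 (b r))) ⁻¹' (g ⁻¹' Sset) := rfl
      rw [Measure.map_apply hEmeas (MeasurableSet.cylinder s hSmeas),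
        Measure.map_apply hEmeas (MeasurableSet.cylinder s hSmeas), hcylg,
        ← Measure.map_apply (hERmeas R) (hgmeas hSmeas),
        ← Measure.map_apply (hERmeas R) (hgmeas hSmeas), ERstep R]
    -- the support rectangle
    have hμs : μ (msupport μ)ᶜ = 0 := msupport_compl_null μ
    have hνs : ν (msupport ν)ᶜ = 0 := msupport_compl_null ν
    set K : Set (X × Y) := msupport μ ×ˢ msupport ν with hK
    have hKclosed : IsClosed K := (msupport_isClosed μ).prod (msupport_isClosed ν)
    have hKmeas : MeasurableSet K := hKclosed.measurableSet
    have hKcompact : IsCompact K := hKclosed.isCompact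
    have hlamK : lam Kᶜ = 0 := by
      rw [hK, Set.compl_prod_eq_union]
      refine measure_union_null ?_ ?_
      · rw [Set.prod_univ, ← Measure.map_apply measurable_fst
          (msupport_isClosed μ).measurableSet.compl, hfst]
        exact hμs
      · rw [Set.univ_prod, ← Measure.map_apply measurable_snd
          (msupport_isClosed ν).measurableSet.compl, hsnd]
        exact hνs
    have hρK : ρ Kᶜ = 0 := by
      rw [hK, Set.compl_prod_eq_union]
      refine measure_union_null ?_ ?_ <;>
        simp [hρ, Measure.prod_prod, hμs, hνs]
    -- injectivity of E on K
    have hEinj : ∀ p ∈ K, ∀ q ∈ K, E p = E q → p = q := by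
      intro p hp q hq hpq
      have hd1 : ∀ r, dist p.1 (a r) = dist q.1 (a r) :=
        fun r => congrArg Prod.fst (congrFun hpq r)
      have hd2 : ∀ r, dist p.2 (b r) = dist q.2 (b r) :=
        fun r => congrArg Prod.snd (congrFun hpq r)
      have h1 : p.1 = q.1 := by
        refine eq_of_dist_eq_zero (le_antisymm
          (le_of_forall_pos_le_add fun ε hε => ?_) dist_nonneg)
        obtain ⟨y, ⟨r, rfl⟩, hy⟩ :=
          Metric.mem_closure_iff.1 (ha hp.1) (ε / 2) (by positivity)
        calc dist p.1 q.1 ≤ dist p.1 (a r) + dist q.1 (a r) := dist_triangle_right _ _ _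
          _ = dist p.1 (a r) + dist p.1 (a r) := by rw [hd1 r]
          _ ≤ 0 + ε := by linarith
      have h2 : p.2 = q.2 := by
        refine eq_of_dist_eq_zero (le_antisymm
          (le_of_forall_pos_le_add fun ε hε => ?_) dist_nonneg)
        obtain ⟨y, ⟨r, rfl⟩, hy⟩ :=
          Metric.mem_closure_iff.1 (hb hp.2) (ε / 2) (by positivity)
        calc dist p.2 q.2 ≤ dist p.2 (b r) + dist q.2 (b r) := dist_triangle_right _ _ _
          _ = dist p.2 (b r) + dist p.2 (b r) := by rw [hd2 r]
          _ ≤ 0 + ε := by linarith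
      exact Prod.ext h1 h2
    -- reconstruction via the measurable embedding on K
    haveI : CompactSpace K := isCompact_iff_compactSpace.1 hKcompact
    set e : K → (ℕ → ℝ × ℝ) := fun k => E k.1 with he
    have hecont : Continuous e := hEcont.comp continuous_subtype_val
    have heinj : Function.Injective e := fun k k' hkk' =>
      Subtype.ext (hEinj _ k.2 _ k'.2 hkk')
    have hme : MeasurableEmbedding e := (hecont.isClosedEmbedding heinj).measurableEmbedding
    refine Measure.ext fun s hs => ?_
    set C : Set (ℕ → ℝ × ℝ) := e '' (Subtype.val ⁻¹' s) with hC
    have hCmeas : MeasurableSet C := hme.measurableSet_image.2 (measurable_subtype_coe hs)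
    have hpre : E ⁻¹' C ∩ K = s ∩ K := by
      ext p
      constructor
      · rintro ⟨hp1, hp2⟩
        obtain ⟨k, hks, hk⟩ := hp1
        have hkp : (k : X × Y) = p := hEinj _ k.2 _ hp2 hk
        exact ⟨hkp ▸ hks, hp2⟩
      · rintro ⟨hp1, hp2⟩
        exact ⟨⟨⟨p, hp2⟩, hp1, rfl⟩, hp2⟩
    have key : ∀ κ : Measure (X × Y), κ Kᶜ = 0 → κ s = Measure.map E κ C := by
      intro κ hκ
      calc κ s = κ (s ∩ K) := (measure_inter_conull hκ).symm
        _ = κ (E ⁻¹' C ∩ K) := by rw [hpre]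
        _ = κ (E ⁻¹' C) := measure_inter_conull hκ
        _ = Measure.map E κ C := (Measure.map_apply hEmeas hCmeas).symm
    rw [key lam hlamK, hEeq, ← key ρ hρK]
end

section
/- On the circle ℝ/ℤ with Haar measure, let f(u) = min(u, 1−u). Then for all integers 0 ≤ s < t, Cov(f(2^s U), f(2^t U)) = 0, where U is Haar-distributed. Consequently, for A_m = (1/m) Σ_{t=0}^{m−1} f(2^t U), one has Var(A_m) = 1/(48m). -/
/-!
Write `g = circleDist - 1/4`. Since `g (u + 1/2) = -g u` while `g (2 ^ k * ·)` has period `1/2`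
for `k ≥ 1`, the product `g x * g (2 ^ k * x)` changes sign under `x ↦ x + 1/2` and integrates to
`0` over `[0, 1]`; the substitution `x ↦ 2 ^ s * x` preserves integrals of `1`-periodic functions
over `[0, 1]`, so all the covariances vanish. The variance of the orbit average is then
`m * ∫ g ^ 2 / m ^ 2` by Pythagoras, and `∫₀¹ g ^ 2 = 2 ∫₀^{1/2} (x - 1/4) ^ 2 = 1/48`.
-/

/-- The distance-to-zero function on the circle `ℝ/ℤ`, read on `ℝ` via the
fractional part. -/
noncomputable def circleDist (u : ℝ) : ℝ :=
  min (Int.fract u) (1 - Int.fract u)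

open MeasureTheory Function

namespace Function

theorem Periodic.intervalIntegral_comp_nat_mul {E : Type*} [NormedAddCommGroup E]
    [NormedSpace ℝ E] {f : ℝ → E} {T : ℝ} (hf : Periodic f T)
    (h_int : ∀ t₁ t₂, IntervalIntegrable f volume t₁ t₂) {n : ℕ} (hn : n ≠ 0) :
    ∫ x in 0..T, f (n * x) = ∫ x in 0..T, f x := by
  have hn' : (n : ℝ) ≠ 0 := Nat.cast_ne_zero.2 hn
  have h_periods : ∫ x in 0..n • T, f x = n • ∫ x in 0..T, f x := by
    simpa using hf.intervalIntegral_add_zsmul_eq n 0 h_int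
  rw [intervalIntegral.integral_comp_mul_left f hn', mul_zero, ← nsmul_eq_mul, h_periods,
    ← Nat.cast_smul_eq_nsmul ℝ, smul_smul, inv_mul_cancel₀ hn', one_smul]

theorem Antiperiodic.intervalIntegral_add_two_mul_eq_zero {E : Type*} [NormedAddCommGroup E]
    [NormedSpace ℝ E] {f : ℝ → E} {c : ℝ} (hf : Antiperiodic f c)
    (h_int : ∀ t₁ t₂, IntervalIntegrable f volume t₁ t₂) (a : ℝ) :
    ∫ x in a..a + 2 * c, f x = 0 := by
  have h_shift : ∫ x in a + c..a + c + c, f x = -∫ x in a..a + c, f x := by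
    rw [← intervalIntegral.integral_comp_add_right, ← intervalIntegral.integral_neg]
    simp only [hf _]
  rw [two_mul, ← add_assoc, ← intervalIntegral.integral_add_adjacent_intervals (h_int _ _)
    (h_int _ _), h_shift, add_neg_cancel]

theorem Antiperiodic.periodic_comp_two_pow_mul {g : ℝ → ℝ} (hg : Antiperiodic g (1 / 2))
    (k : ℕ) : Periodic (fun x => g (2 ^ (k + 1) * x)) (1 / 2) := by
  intro x
  have h_per : Periodic g 1 := by simpa using hg.periodic_two_mul
  dsimp only
  rw [show (2 : ℝ) ^ (k + 1) * (x + 1 / 2) = 2 ^ (k + 1) * x + (2 ^ k : ℕ) * 1 by push_cast; ring]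
  exact h_per.nat_mul (2 ^ k) _

end Function

theorem integral_sq_sum_of_orthogonal {α ι : Type*} [MeasurableSpace α] {μ : Measure α}
    (s : Finset ι) (X : ι → α → ℝ)
    (h_int : ∀ i ∈ s, ∀ j ∈ s, Integrable (fun x => X i x * X j x) μ)
    (h_orth : ∀ i ∈ s, ∀ j ∈ s, i ≠ j → ∫ x, X i x * X j x ∂μ = 0) :
    ∫ x, (∑ i ∈ s, X i x) ^ 2 ∂μ = ∑ i ∈ s, ∫ x, X i x ^ 2 ∂μ := by
  simp only [sq, Finset.sum_mul_sum]
  rw [integral_finsetSum _ fun i hi => integrable_finsetSum _ fun j hj => h_int i hi j hj]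
  refine Finset.sum_congr rfl fun i hi => ?_
  rw [integral_finsetSum _ fun j hj => h_int i hi j hj]
  exact Finset.sum_eq_single_of_mem i hi fun j hj hji => h_orth i hi j hj hji.symm

section DoublingOrbit

variable {g : ℝ → ℝ}

theorem integral_comp_two_pow_mul_mul_eq_zero (hg_cont : Continuous g)
    (hg : Antiperiodic g (1 / 2)) {s t : ℕ} (hst : s < t) :
    ∫ x in 0..1, g (2 ^ s * x) * g (2 ^ t * x) = 0 := by
  obtain ⟨k, rfl⟩ := Nat.exists_eq_add_of_lt hst
  set φ : ℝ → ℝ := fun x => g x * g (2 ^ (k + 1) * x)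
  have hφ_int : ∀ t₁ t₂, IntervalIntegrable φ volume t₁ t₂ := fun _ _ =>
    Continuous.intervalIntegrable (by fun_prop) _ _
  have hφ : Antiperiodic φ (1 / 2) := fun x => by
    simp only [φ, hg x, hg.periodic_comp_two_pow_mul k x, neg_mul]
  have hφ_per : Periodic φ 1 := by simpa using hφ.periodic_two_mul
  calc ∫ x in 0..1, g (2 ^ s * x) * g (2 ^ (s + k + 1) * x)
      = ∫ x in 0..1, φ ((2 ^ s : ℕ) * x) := by
        simp only [φ, Nat.cast_pow, Nat.cast_ofNat]
        congr 1 with x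
        rw [show (2 : ℝ) ^ (s + k + 1) * x = 2 ^ (k + 1) * (2 ^ s * x) by ring]
    _ = ∫ x in 0..1, φ x := hφ_per.intervalIntegral_comp_nat_mul hφ_int (by positivity)
    _ = 0 := by simpa using hφ.intervalIntegral_add_two_mul_eq_zero hφ_int 0

theorem integral_comp_two_pow_mul_mul_eq_zero_of_ne (hg_cont : Continuous g)
    (hg : Antiperiodic g (1 / 2)) {s t : ℕ} (hst : s ≠ t) :
    ∫ x in 0..1, g (2 ^ s * x) * g (2 ^ t * x) = 0 := by
  rcases hst.lt_or_gt with hst | hts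
  · exact integral_comp_two_pow_mul_mul_eq_zero hg_cont hg hst
  · simpa only [mul_comm] using integral_comp_two_pow_mul_mul_eq_zero hg_cont hg hts

theorem integral_sq_sum_comp_two_pow_mul (hg_cont : Continuous g)
    (hg : Antiperiodic g (1 / 2)) (s : Finset ℕ) :
    ∫ x in 0..1, (∑ t ∈ s, g (2 ^ t * x)) ^ 2 = s.card * ∫ x in 0..1, g x ^ 2 := by
  have hg_per : Periodic g 1 := by simpa using hg.periodic_two_mul
  have h_per : Periodic (fun x => g x ^ 2) 1 := fun x => by simp only [hg_per x]
  have h_int : ∀ t₁ t₂, IntervalIntegrable (fun x => g x ^ 2) volume t₁ t₂ := fun _ _ =>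
    Continuous.intervalIntegrable (by fun_prop) _ _
  calc ∫ x in 0..1, (∑ t ∈ s, g (2 ^ t * x)) ^ 2
      = ∑ t ∈ s, ∫ x in 0..1, g (2 ^ t * x) ^ 2 := by
        simp only [intervalIntegral.integral_of_le zero_le_one]
        refine integral_sq_sum_of_orthogonal s _
          (fun i _ j _ => (Continuous.intervalIntegrable (by fun_prop) 0 1).1)
          (fun i _ j _ hij => ?_)
        rw [← intervalIntegral.integral_of_le zero_le_one]
        exact integral_comp_two_pow_mul_mul_eq_zero_of_ne hg_cont hg hij
    _ = ∑ t ∈ s, ∫ x in 0..1, g x ^ 2 := Finset.sum_congr rfl fun t _ => by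
        simpa using h_per.intervalIntegral_comp_nat_mul h_int (n := 2 ^ t) (by positivity)
    _ = s.card * ∫ x in 0..1, g x ^ 2 := by rw [Finset.sum_const, nsmul_eq_mul]

end DoublingOrbit

theorem circleDist_add_int (u : ℝ) (n : ℤ) : circleDist (u + n) = circleDist u := by
  simp only [circleDist, Int.fract_add_intCast]

@[fun_prop]
theorem continuous_circleDist : Continuous circleDist :=
  (continuous_id.min (continuous_const.sub continuous_id)).continuousOn.comp_fract'' (by norm_num)

theorem circleDist_of_le_half {u : ℝ} (h0 : 0 ≤ u) (h1 : u ≤ 1 / 2) : circleDist u = u := by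
  rw [circleDist, Int.fract_eq_self.2 ⟨h0, by linarith⟩, min_eq_left (by linarith)]

theorem circleDist_add_half (u : ℝ) : circleDist (u + 1 / 2) = 1 / 2 - circleDist u := by
  rw [← Int.fract_add_floor u, add_right_comm, circleDist_add_int, circleDist_add_int]
  have h0 := Int.fract_nonneg u
  have h1 := Int.fract_lt_one u
  rcases lt_or_ge (Int.fract u) (1 / 2) with h | h
  · rw [circleDist, circleDist, Int.fract_eq_self.2 ⟨by linarith, by linarith⟩, Int.fract_fract]
    simp only [min_def]; split_ifs <;> linarith
  · rw [circleDist, circleDist, show Int.fract u + 1 / 2 = Int.fract u - 1 / 2 + (1 : ℤ) by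
      push_cast; ring, Int.fract_add_intCast, Int.fract_eq_self.2 ⟨by linarith, by linarith⟩,
      Int.fract_fract]
    simp only [min_def]; split_ifs <;> linarith

theorem antiperiodic_circleDist_sub_quarter :
    Antiperiodic (fun u => circleDist u - 1 / 4) (1 / 2) := fun u => by
  dsimp only
  rw [circleDist_add_half]
  ring

theorem integral_circleDist_sub_quarter_sq : ∫ x in 0..1, (circleDist x - 1 / 4) ^ 2 = 1 / 48 := by
  have h_per : Periodic (fun x => (circleDist x - 1 / 4) ^ 2) (1 / 2) := fun x => by
    simp only [antiperiodic_circleDist_sub_quarter x, neg_sq]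
  have h_int : ∀ t₁ t₂, IntervalIntegrable (fun x => (circleDist x - 1 / 4) ^ 2) volume t₁ t₂ :=
    fun _ _ => (by fun_prop : Continuous _).intervalIntegrable _ _
  calc ∫ x in 0..1, (circleDist x - 1 / 4) ^ 2
      = ∫ x in 0..0 + (2 : ℤ) • (1 / 2 : ℝ), (circleDist x - 1 / 4) ^ 2 := by norm_num
    _ = (2 : ℤ) • ∫ x in 0..0 + 1 / 2, (circleDist x - 1 / 4) ^ 2 :=
        h_per.intervalIntegral_add_zsmul_eq 2 0 h_int
    _ = (2 : ℤ) • ∫ x in 0..1 / 2, (x - 1 / 4) ^ 2 := by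
        rw [zero_add]
        congr 1
        refine intervalIntegral.integral_congr fun x hx => ?_
        rw [Set.uIcc_of_le (by norm_num)] at hx
        simp only [circleDist_of_le_half hx.1 hx.2]
    _ = 1 / 48 := by norm_num [intervalIntegral.integral_comp_sub_right (fun x => x ^ 2)]

/-- On the circle with Haar measure, `Cov(f(2^s U), f(2^t U)) = 0` for
`0 ≤ s < t`, where `f = circleDist` (mean `1/4`); consequently the orbit
average `A_m = (1/m) Σ_{t<m} f(2^t U)` of the doubling map satisfies
`Var(A_m) = 1/(48 m)`. -/
theorem doubling_orbit_average_variance :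
    (∀ s t : ℕ, s < t →
      (∫ x in (0:ℝ)..1,
        (circleDist ((2:ℝ) ^ s * x) - 1 / 4) * (circleDist ((2:ℝ) ^ t * x) - 1 / 4)) = 0) ∧
    (∀ m : ℕ, 0 < m →
      (∫ x in (0:ℝ)..1,
        ((1 / (m : ℝ)) * (∑ t ∈ Finset.range m, circleDist ((2:ℝ) ^ t * x)) - 1 / 4) ^ 2)
        = 1 / (48 * (m : ℝ))) := by
  have hg_cont : Continuous fun u => circleDist u - 1 / 4 := by fun_prop
  refine ⟨fun s t hst => integral_comp_two_pow_mul_mul_eq_zero hg_cont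
    antiperiodic_circleDist_sub_quarter hst, fun m hm => ?_⟩
  have hm' : (m : ℝ) ≠ 0 := by positivity
  have h_center : ∀ x : ℝ,
      ((1 / (m : ℝ)) * (∑ t ∈ Finset.range m, circleDist ((2:ℝ) ^ t * x)) - 1 / 4) ^ 2
        = (1 / (m : ℝ)) ^ 2 * (∑ t ∈ Finset.range m, (circleDist (2 ^ t * x) - 1 / 4)) ^ 2 := by
    intro x
    rw [← mul_pow, Finset.sum_sub_distrib, Finset.sum_const, Finset.card_range, nsmul_eq_mul,
      mul_sub, ← mul_assoc, one_div_mul_cancel hm', one_mul]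
  simp only [h_center, intervalIntegral.integral_const_mul,
    integral_sq_sum_comp_two_pow_mul hg_cont antiperiodic_circleDist_sub_quarter,
    Finset.card_range, integral_circleDist_sub_quarter_sq]
  field_simp
end
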